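/- In the proof of the single-variable reduction for CTL*, the auxiliary model construction is sound: given a serial Kripke model M where p_{n+1} holds everywhere and M,s ⊨ φ', the model M' obtained by disjointly adding the chain models M₁,...,M_{n+1} and linking each state x of M to the root r_m of M_m exactly when M,x ⊨ p_m (with p false at all original states of M) satisfies: for every state x of M and every i ∈ {1,...,n+1}, M',x ⊨ EX A_i iff M,x ⊨ p_i. -/

import Mathlib

/-- CTL formulas: variables, falsehood, implication, AX, ∀U, ∃U. -/
inductive CTL : Type where
  | var : ℕ → CTL
  | bot : CTL
  | imp : CTL → CTL → CTL
  | ax : CTL → CTL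
  | au : CTL → CTL → CTL
  | eu : CTL → CTL → CTL

namespace CTL
def neg (φ : CTL) : CTL := imp φ bot
def top : CTL := imp bot bot
def conj (φ ψ : CTL) : CTL := neg (imp φ (neg ψ))
def iffc (φ ψ : CTL) : CTL := conj (imp φ ψ) (imp ψ φ)
def ex (φ : CTL) : CTL := neg (ax (neg φ))
def ef (φ : CTL) : CTL := eu top φ
def ag (φ : CTL) : CTL := neg (ef (neg φ))
end CTL

/-- Serial Kripke models. -/
structure Kripke (S : Type) where
  rel : S → S → Prop
  serial : ∀ s, ∃ t, rel s t
  val : ℕ → S → Prop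

def isPath {S : Type} (M : Kripke S) (π : ℕ → S) : Prop :=
  ∀ i, M.rel (π i) (π (i + 1))

/-- CTL satisfaction over serial Kripke models. -/
def sat {S : Type} (M : Kripke S) : CTL → S → Prop
  | .var n, s => M.val n s
  | .bot, _ => False
  | .imp a b, s => sat M a s → sat M b s
  | .ax a, s => ∀ t, M.rel s t → sat M a t
  | .au a b, s => ∀ π, isPath M π → π 0 = s →
      ∃ i, sat M b (π i) ∧ ∀ j, j < i → sat M a (π j)
  | .eu a b, s => ∃ π, isPath M π ∧ π 0 = s ∧
      ∃ i, sat M b (π i) ∧ ∀ j, j < i → sat M a (π j)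

def satisfiable (φ : CTL) : Prop := ∃ (S : Type) (M : Kripke S) (s : S), sat M φ s
def valid (φ : CTL) : Prop := ∀ (S : Type) (M : Kripke S) (s : S), sat M φ s

/-- Variable q occurs in a formula. -/
def occurs (q : ℕ) : CTL → Prop
  | .var n => n = q
  | .bot => False
  | .imp a b => occurs q a ∨ occurs q b
  | .ax a => occurs q a
  | .au a b => occurs q a ∨ occurs q b
  | .eu a b => occurs q a ∨ occurs q b

/-- Uniform substitution of ψ for variable p. -/
def subst (p : ℕ) (ψ : CTL) : CTL → CTL
  | .var n => if n = p then ψ else .var n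
  | .bot => .bot
  | .imp a b => .imp (subst p ψ a) (subst p ψ b)
  | .ax a => .ax (subst p ψ a)
  | .au a b => .au (subst p ψ a) (subst p ψ b)
  | .eu a b => .eu (subst p ψ a) (subst p ψ b)

/-- The relativizing translation ·' with guard variable q. -/
def relTr (q : ℕ) : CTL → CTL
  | .var n => .var n
  | .bot => .bot
  | .imp a b => .imp (relTr q a) (relTr q b)
  | .ax a => .ax (.imp (.var q) (relTr q a))
  | .au a b => .au (relTr q a) (CTL.conj (.var q) (relTr q b))
  | .eu a b => .eu (relTr q a) (CTL.conj (.var q) (relTr q b))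

/-- Θ = q ∧ AG(EX q ↔ q). -/
def Theta (q : ℕ) : CTL :=
  CTL.conj (.var q) (CTL.ag (CTL.iffc (CTL.ex (.var q)) (.var q)))

/-- Transition relation of the chain model M_m: state 0 = root r_m, state 1 = b^m,
state i+1 = a_i for 1 ≤ i ≤ 2m; self-loops everywhere. -/
def chainRel (m : ℕ) (s t : Fin (2 * m + 2)) : Prop :=
  (s.val = 0 ∧ (t.val = 1 ∨ t.val = 2)) ∨
  (2 ≤ s.val ∧ s.val ≤ 2 * m ∧ t.val = s.val + 1) ∨
  t = s

/-- p is true exactly at the root and the even-indexed chain states a_{2j}. -/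
def chainVal (m : ℕ) (s : Fin (2 * m + 2)) : Prop :=
  s.val = 0 ∨ (3 ≤ s.val ∧ s.val % 2 = 1)

def chainModel (m : ℕ) : Kripke (Fin (2 * m + 2)) where
  rel := chainRel m
  serial := fun s => ⟨s, Or.inr (Or.inr rfl)⟩
  val := fun n s => n = 0 ∧ chainVal m s

def chainRoot (m : ℕ) : Fin (2 * m + 2) := ⟨0, by omega⟩

/-- χ₀ = ∀□p, χ_{k+1} = p ∧ EX(¬p ∧ EX χ_k); the single variable p is var 0. -/
def chi : ℕ → CTL
  | 0 => CTL.ag (.var 0)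
  | k + 1 => CTL.conj (.var 0) (CTL.ex (CTL.conj (CTL.neg (.var 0)) (CTL.ex (chi k))))

/-- A_m = χ_m ∧ EX AG ¬p. -/
def Aform (m : ℕ) : CTL := CTL.conj (chi m) (CTL.ex (CTL.ag (CTL.neg (.var 0))))

/-- B_m = EX A_m. -/
def Bform (m : ℕ) : CTL := CTL.ex (Aform m)

/-- The substitution σ : pᵢ ↦ Bᵢ for 1 ≤ i ≤ n+1. -/
def sigmaSub (n : ℕ) : CTL → CTL
  | .var i => if 1 ≤ i ∧ i ≤ n + 1 then Bform i else .var i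
  | .bot => .bot
  | .imp a b => .imp (sigmaSub n a) (sigmaSub n b)
  | .ax a => .ax (sigmaSub n a)
  | .au a b => .au (sigmaSub n a) (sigmaSub n b)
  | .eu a b => .eu (sigmaSub n a) (sigmaSub n b)

/-- States of the extended model M': the states of M plus the disjoint union of
the chain models M_1, …, M_{n+1} (chain i has index i.val, modelling M_{i.val+1}). -/
def ExtS (S : Type) (n : ℕ) : Type := S ⊕ ((i : Fin (n + 1)) × Fin (2 * (i.val + 1) + 2))

/-- The extended model M': disjointly add the chain models M_1,…,M_{n+1} to M,
link each state x of M to the root of M_m exactly when M,x ⊨ p_m, and let p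
(var 0) be true only at the designated chain states (false at all states of M). -/
def extModel {S : Type} (M : Kripke S) (n : ℕ) : Kripke (ExtS S n) where
  rel := fun x y =>
    match x, y with
    | Sum.inl a, Sum.inl b => M.rel a b
    | Sum.inl a, Sum.inr ⟨i, t⟩ => M.val (i.val + 1) a ∧ t.val = 0
    | Sum.inr _, Sum.inl _ => False
    | Sum.inr ⟨i, s⟩, Sum.inr ⟨j, t⟩ =>
        ∃ h : i = j,
          chainRel (j.val + 1) (Fin.cast (congrArg (fun x => 2 * (x.val + 1) + 2) h) s) t
  serial := fun x => by
    cases x with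
    | inl a =>
        obtain ⟨t, ht⟩ := M.serial a
        exact ⟨Sum.inl t, ht⟩
    | inr b =>
        obtain ⟨i, s⟩ := b
        exact ⟨Sum.inr ⟨i, s⟩, rfl, Or.inr (Or.inr (by apply Fin.ext; simp))⟩
  val := fun k x =>
    match x with
    | Sum.inl a => k ≠ 0 ∧ M.val k a
    | Sum.inr ⟨i, s⟩ => k = 0 ∧ chainVal (i.val + 1) s

/-!
Every chain component of `M'` is a generated submodel, i.e. the image of `M_m` under a bounded
morphism, so CTL formulas are evaluated there exactly as in `M_m`. In `M_m` the formula `χ_k`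
holds only at the root (when `k = m`) and at the chain state `2k` steps below the top `a_{2m}`:
`χ_k` asks for `k` alternations `p, ¬p` ending in the `p`-sink. The branch to `b^m` makes
`EX AG ¬p` true at the root. Since `p` is false on `M`, a state `x` of `M` satisfies `EX A_i`
iff it is linked to the root of `M_i`, i.e. iff `M, x ⊨ p_i`.
-/

section Semantics

variable {S : Type} (M : Kripke S)

theorem sat_var (k : ℕ) (s : S) : sat M (.var k) s ↔ M.val k s := Iff.rfl

theorem sat_neg (a : CTL) (s : S) : sat M (CTL.neg a) s ↔ ¬ sat M a s := Iff.rfl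

theorem sat_conj (a b : CTL) (s : S) : sat M (CTL.conj a b) s ↔ sat M a s ∧ sat M b s := by
  simp only [CTL.conj, CTL.neg, sat]
  tauto

theorem sat_ex (a : CTL) (s : S) : sat M (CTL.ex a) s ↔ ∃ t, M.rel s t ∧ sat M a t := by
  simp [CTL.ex, CTL.neg, sat]

theorem sat_ag (a : CTL) (s : S) :
    sat M (CTL.ag a) s ↔ ∀ π, isPath M π → π 0 = s → ∀ i, sat M a (π i) := by
  simp [CTL.ag, CTL.ef, CTL.top, CTL.neg, sat]

theorem exists_isPath (s : S) : ∃ π, isPath M π ∧ π 0 = s := by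
  choose next hnext using M.serial
  refine ⟨fun i => next^[i] s, fun i => ?_, rfl⟩
  simpa only [Function.iterate_succ_apply'] using hnext _

theorem exists_isPath_of_rel {s t : S} (hst : M.rel s t) :
    ∃ π, isPath M π ∧ π 0 = s ∧ π 1 = t := by
  obtain ⟨π, hπ, h0⟩ := exists_isPath M t
  refine ⟨fun | 0 => s | i + 1 => π i, ?_, rfl, h0⟩
  rintro (_ | i)
  · simpa [h0] using hst
  · exact hπ i

variable {M}

theorem sat_of_sat_ag {a : CTL} {s : S} (h : sat M (CTL.ag a) s) :
    sat M a s ∧ ∀ t, M.rel s t → sat M a t := by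
  refine ⟨?_, fun t hst => ?_⟩
  · obtain ⟨π, hπ, h0⟩ := exists_isPath M s
    exact h0 ▸ (sat_ag M a s).1 h π hπ h0 0
  · obtain ⟨π, hπ, h0, h1⟩ := exists_isPath_of_rel M hst
    exact h1 ▸ (sat_ag M a s).1 h π hπ h0 1

theorem sat_ag_of_forall_rel_eq {a : CTL} {s : S} (hs : ∀ t, M.rel s t → t = s)
    (ha : sat M a s) : sat M (CTL.ag a) s := by
  refine (sat_ag M a s).2 fun π hπ h0 i => ?_
  suffices π i = s from this ▸ ha
  induction i with
  | zero => exact h0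
  | succ i ih => exact hs _ (ih ▸ hπ i)

theorem sat_chi_succ (k : ℕ) (s : S) :
    sat M (chi (k + 1)) s ↔
      M.val 0 s ∧ ∃ t, M.rel s t ∧ ¬ M.val 0 t ∧ ∃ u, M.rel t u ∧ sat M (chi k) u := by
  simp only [chi, sat_conj, sat_ex, sat_neg, sat]

end Semantics

section BoundedMorphism

variable {S T : Type}

structure IsBoundedMorphism (M : Kripke S) (N : Kripke T) (f : S → T) : Prop where
  map_rel : ∀ {a b}, M.rel a b → N.rel (f a) (f b)
  exists_rel_of_rel : ∀ {a y}, N.rel (f a) y → ∃ b, M.rel a b ∧ f b = y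
  val_iff : ∀ k a, N.val k (f a) ↔ M.val k a

namespace IsBoundedMorphism

variable {M : Kripke S} {N : Kripke T} {f : S → T}

theorem isPath_comp (hf : IsBoundedMorphism M N f) {π : ℕ → S} (hπ : isPath M π) :
    isPath N (f ∘ π) :=
  fun i => hf.map_rel (hπ i)

theorem exists_isPath_lift (hf : IsBoundedMorphism M N f) {ρ : ℕ → T} (hρ : isPath N ρ)
    {a : S} (h0 : ρ 0 = f a) : ∃ π, isPath M π ∧ π 0 = a ∧ f ∘ π = ρ := by
  choose next hnext using fun i (b : {b // f b = ρ i}) => hf.exists_rel_of_rel (b.2 ▸ hρ i)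
  let lift : ∀ i, {b // f b = ρ i} :=
    fun i => Nat.rec ⟨a, h0.symm⟩ (fun i b => ⟨next i b, (hnext i b).2⟩) i
  exact ⟨fun i => (lift i).1, fun i => (hnext i (lift i)).1, rfl, funext fun i => (lift i).2⟩

theorem sat_iff (hf : IsBoundedMorphism M N f) (φ : CTL) (a : S) :
    sat N φ (f a) ↔ sat M φ a := by
  induction φ generalizing a with
  | var k => exact hf.val_iff k a
  | bot => exact Iff.rfl
  | imp φ ψ ihφ ihψ => exact imp_congr (ihφ a) (ihψ a)
  | ax φ ih =>
    constructor
    · exact fun h b hab => (ih b).1 (h _ (hf.map_rel hab))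
    · intro h y hy
      obtain ⟨b, hab, rfl⟩ := hf.exists_rel_of_rel hy
      exact (ih b).2 (h b hab)
  | au φ ψ ihφ ihψ =>
    constructor
    · intro h π hπ h0
      simpa only [Function.comp, ihφ, ihψ] using h _ (hf.isPath_comp hπ) (by simp [h0])
    · intro h ρ hρ h0
      obtain ⟨π, hπ, rfl, rfl⟩ := hf.exists_isPath_lift hρ h0
      simpa only [Function.comp, ihφ, ihψ] using h π hπ rfl
  | eu φ ψ ihφ ihψ =>
    constructor
    · rintro ⟨ρ, hρ, h0, hρsat⟩
      obtain ⟨π, hπ, rfl, rfl⟩ := hf.exists_isPath_lift hρ h0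
      exact ⟨π, hπ, rfl, by simpa only [Function.comp, ihφ, ihψ] using hρsat⟩
    · rintro ⟨π, hπ, rfl, hπsat⟩
      exact ⟨f ∘ π, hf.isPath_comp hπ, rfl, by simpa only [Function.comp, ihφ, ihψ] using hπsat⟩

end IsBoundedMorphism

end BoundedMorphism

section ChainModel

variable {m : ℕ}

theorem chainModel_rel_iff (v t : Fin (2 * m + 2)) :
    (chainModel m).rel v t ↔
      (v.val = 0 ∧ (t.val = 1 ∨ t.val = 2)) ∨ (2 ≤ v.val ∧ v.val ≤ 2 * m ∧ t.val = v.val + 1) ∨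
        t.val = v.val := by
  rw [Fin.val_inj]
  rfl

theorem chainModel_val_zero (v : Fin (2 * m + 2)) :
    (chainModel m).val 0 v ↔ v.val = 0 ∨ (3 ≤ v.val ∧ v.val % 2 = 1) :=
  and_iff_right rfl

/-- `b^m` (state `1`) and the top `a_{2m}` (state `2m + 1`) are sinks. -/
theorem eq_of_chainModel_rel_of_sink {v t : Fin (2 * m + 2)} (hv : v.val = 1 ∨ v.val = 2 * m + 1)
    (h : (chainModel m).rel v t) : t = v := by
  rw [chainModel_rel_iff] at h
  exact Fin.ext (by omega)

theorem sat_chi_zero_chainModel (hm : 1 ≤ m) (v : Fin (2 * m + 2)) :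
    sat (chainModel m) (chi 0) v ↔ v.val = 2 * m + 1 := by
  constructor
  · intro h
    obtain ⟨hv, hsucc⟩ := sat_of_sat_ag h
    rw [sat_var, chainModel_val_zero] at hv
    by_contra hne
    have hlt : v.val + 1 < 2 * m + 2 := by omega
    refine (chainModel_val_zero _).not.2 ?_ (hsucc ⟨v.val + 1, hlt⟩ ?_)
    · dsimp only
      omega
    · rw [chainModel_rel_iff]
      dsimp only
      omega
  · intro hv
    refine sat_ag_of_forall_rel_eq (fun t => eq_of_chainModel_rel_of_sink (.inr hv)) ?_
    rw [sat_var, chainModel_val_zero]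
    omega

/-- In `M_m`, `χ_k` holds exactly at the root when `k = m` and at `a_{2m-2k}` for `k < m`. -/
theorem sat_chi_chainModel (hm : 1 ≤ m) (k : ℕ) (v : Fin (2 * m + 2)) :
    sat (chainModel m) (chi k) v ↔
      (3 ≤ v.val ∧ v.val + 2 * k = 2 * m + 1) ∨ (v.val = 0 ∧ k = m) := by
  induction k generalizing v with
  | zero =>
    rw [sat_chi_zero_chainModel hm]
    omega
  | succ k ih =>
    simp only [sat_chi_succ, ih, chainModel_val_zero, chainModel_rel_iff]
    constructor
    · rintro ⟨hv, t, hvt, ht, u, htu, hu⟩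
      omega
    · rintro (⟨h3, hk⟩ | ⟨h0, hk⟩)
      · refine ⟨by omega, ⟨v.val + 1, by omega⟩, ?_, ?_, ⟨v.val + 2, by omega⟩, ?_, ?_⟩
        all_goals dsimp only; omega
      · refine ⟨by omega, ⟨2, by omega⟩, ?_, ?_, ⟨3, by omega⟩, ?_, ?_⟩
        all_goals dsimp only; omega

theorem sat_aform_chainRoot (hm : 1 ≤ m) (k : ℕ) :
    sat (chainModel m) (Aform k) (chainRoot m) ↔ k = m := by
  have hb : (chainModel m).rel (chainRoot m) ⟨1, by omega⟩ := by
    simp [chainModel_rel_iff, chainRoot]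
  have hAGb : sat (chainModel m) (CTL.ag (CTL.neg (.var 0))) ⟨1, by omega⟩ :=
    sat_ag_of_forall_rel_eq (fun t => eq_of_chainModel_rel_of_sink (.inl rfl))
      ((chainModel_val_zero _).not.2 (by simp))
  rw [Aform, sat_conj, sat_chi_chainModel hm, sat_ex]
  simp only [chainRoot]
  constructor
  · rintro ⟨h, -⟩
    omega
  · exact fun hk => ⟨by simp [hk], _, hb, hAGb⟩

end ChainModel

section ExtModel

variable {S : Type} (M : Kripke S) (n : ℕ)

theorem isBoundedMorphism_chain (j : Fin (n + 1)) :
    IsBoundedMorphism (chainModel (j.val + 1)) (extModel M n) (fun v => Sum.inr ⟨j, v⟩) where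
  map_rel h := ⟨rfl, h⟩
  exists_rel_of_rel := by
    rintro a (y | ⟨j', t⟩) h
    · exact h.elim
    · obtain ⟨rfl, h⟩ := h
      exact ⟨t, h, rfl⟩
  val_iff _ _ := Iff.rfl

theorem not_sat_aform_succ_extModel_inl (k : ℕ) (x : S) :
    ¬ sat (extModel M n) (Aform (k + 1)) (Sum.inl x) := fun h =>
  (((sat_chi_succ k _).1 ((sat_conj _ _ _ _).1 h).1).1).1 rfl

theorem sat_aform_extModel_chainRoot (j : Fin (n + 1)) (k : ℕ) :
    sat (extModel M n) (Aform k) (Sum.inr ⟨j, chainRoot _⟩) ↔ k = j.val + 1 :=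
  ((isBoundedMorphism_chain M n j).sat_iff _ _).trans (sat_aform_chainRoot (by omega) k)

end ExtModel

theorem ext_model_sound_general {S : Type} (M : Kripke S) (n : ℕ) :
    ∀ (x : S) (i : ℕ), 1 ≤ i → i ≤ n + 1 →
      (sat (extModel M n) (Bform i) (Sum.inl x) ↔ M.val i x) := by
  intro x i hi1 hi2
  obtain ⟨k, rfl⟩ : ∃ k, i = k + 1 := ⟨i - 1, by omega⟩
  refine (sat_ex _ _ _).trans ⟨?_, fun hx => ?_⟩
  · rintro ⟨y | ⟨j, t⟩, hxy, hA⟩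
    · exact absurd hA (not_sat_aform_succ_extModel_inl M n k y)
    · obtain ⟨hx, ht⟩ : M.val (j.val + 1) x ∧ t.val = 0 := hxy
      obtain rfl : t = chainRoot _ := Fin.ext ht
      rwa [(sat_aform_extModel_chainRoot M n j _).1 hA]
  · exact ⟨Sum.inr ⟨⟨k, by omega⟩, chainRoot _⟩, ⟨hx, rfl⟩,
      (sat_aform_extModel_chainRoot M n _ _).2 rfl⟩

/-- Soundness of the auxiliary model construction: if p_{n+1} holds everywhere in
the serial model M and M,s ⊨ φ', then in the extended model M', for every state x
of M and every i ∈ {1,…,n+1}, M',x ⊨ EX A_i iff M,x ⊨ p_i. -/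
theorem ext_model_sound {S : Type} (M : Kripke S) (n : ℕ) (φ : CTL) (s : S)
    (hall : ∀ t : S, M.val (n + 1) t)
    (hs : sat M (relTr (n + 1) φ) s) :
    ∀ (x : S) (i : ℕ), 1 ≤ i → i ≤ n + 1 →
      (sat (extModel M n) (Bform i) (Sum.inl x) ↔ M.val i x) :=
  ext_model_sound_general M n
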